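/- Soundness of the labelled transition semantics with respect to reduction: for all processes P, P' in the sub-calculus T' of CMC_b (all operators except action prefixing, choice, and relabelling), if P → P' then there exists a process Q in T' such that P has a τ-labelled transition to Q and Q ≡ P'. -/

import Mathlib

set_option autoImplicit true
set_option linter.unusedVariables false
open Classical

/-- Ambient names tagged with a set of ports. -/
structure AmbName where
  name : ℕ
  ports : Set ℕ

/-- Capabilities (and values) of CMC. -/
inductive Cap where
  | var : ℕ → Cap
  | inn : AmbName → Cap
  | out : AmbName → Cap
  | eps : Cap
  | seq : Cap → Cap → Cap
  | ploc : ℕ → Cap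
  | sloc : ℕ → Cap
  | name : AmbName → Cap

/-- CMC processes. -/
inductive Proc where
  | zero : Proc
  | cap : Cap → Proc → Proc
  | input : ℕ → ℕ → Proc → Proc
  | output : ℕ → Cap → Proc → Proc
  | tauP : Proc → Proc
  | amb : AmbName → Proc → Proc
  | sum : Proc → Proc → Proc
  | par : Proc → Proc → Proc
  | resAmb : AmbName → Proc → Proc
  | resPort : ℕ → Proc → Proc

def Cap.subst : Cap → ℕ → Cap → Cap
  | .var y, x, c => if y = x then c else .var y
  | .seq c1 c2, x, c => .seq (c1.subst x c) (c2.subst x c)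
  | k, _, _ => k

def Proc.subst : Proc → ℕ → Cap → Proc
  | .zero, _, _ => .zero
  | .cap c P, x, v => .cap (c.subst x v) (P.subst x v)
  | .input a z P, x, v => if z = x then .input a z P else .input a z (P.subst x v)
  | .output a w P, x, v => .output a (w.subst x v) (P.subst x v)
  | .tauP P, x, v => .tauP (P.subst x v)
  | .amb m P, x, v => .amb m (P.subst x v)
  | .sum P Q, x, v => .sum (P.subst x v) (Q.subst x v)
  | .par P Q, x, v => .par (P.subst x v) (Q.subst x v)
  | .resAmb m P, x, v => .resAmb m (P.subst x v)
  | .resPort l P, x, v => .resPort l (P.subst x v)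

/-- Free names (ambient names on the left, port names on the right). -/
def Cap.fn : Cap → Set (AmbName ⊕ ℕ)
  | .var _ => ∅
  | .inn n => {Sum.inl n}
  | .out n => {Sum.inl n}
  | .eps => ∅
  | .seq c1 c2 => c1.fn ∪ c2.fn
  | .ploc _ => ∅
  | .sloc _ => ∅
  | .name n => {Sum.inl n}

def Proc.fn : Proc → Set (AmbName ⊕ ℕ)
  | .zero => ∅
  | .cap c P => c.fn ∪ P.fn
  | .input a _ P => insert (Sum.inr a) P.fn
  | .output a v P => insert (Sum.inr a) (v.fn ∪ P.fn)
  | .tauP P => P.fn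
  | .amb m P => insert (Sum.inl m) P.fn
  | .sum P Q => P.fn ∪ Q.fn
  | .par P Q => P.fn ∪ Q.fn
  | .resAmb m P => P.fn \ {Sum.inl m}
  | .resPort l P => P.fn \ {Sum.inr l}

def Cap.vars : Cap → Set ℕ
  | .var x => {x}
  | .seq c1 c2 => c1.vars ∪ c2.vars
  | .ploc x => {x}
  | .sloc x => {x}
  | _ => ∅

def Proc.vars : Proc → Set ℕ
  | .zero => ∅
  | .cap c P => c.vars ∪ P.vars
  | .input _ z P => insert z P.vars
  | .output _ v P => v.vars ∪ P.vars
  | .tauP P => P.vars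
  | .amb _ P => P.vars
  | .sum P Q => P.vars ∪ Q.vars
  | .par P Q => P.vars ∪ Q.vars
  | .resAmb _ P => P.vars
  | .resPort _ P => P.vars

/-- Iterated ambient-name restriction (ν m̃)P. -/
def resList (ms : List AmbName) (P : Proc) : Proc := ms.foldr Proc.resAmb P

/-- Structural congruence: the least equivalence relation preserved by
restriction, parallel, ambient, capability-prefix and action-prefix,
satisfying the structural axioms of CMC. -/
inductive SC : Proc → Proc → Prop
  | refl (P) : SC P P
  | symm : SC P Q → SC Q P
  | trans : SC P Q → SC Q R → SC P R
  | capC : SC P Q → SC (.cap c P) (.cap c Q)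
  | inputC : SC P Q → SC (.input a z P) (.input a z Q)
  | outputC : SC P Q → SC (.output a v P) (.output a v Q)
  | tauC : SC P Q → SC (.tauP P) (.tauP Q)
  | ambC : SC P Q → SC (.amb m P) (.amb m Q)
  | parC : SC P Q → SC (.par P R) (.par Q R)
  | resAmbC : SC P Q → SC (.resAmb m P) (.resAmb m Q)
  | resPortC : SC P Q → SC (.resPort l P) (.resPort l Q)
  | parComm (P Q) : SC (.par P Q) (.par Q P)
  | parAssoc (P Q R) : SC (.par (.par P Q) R) (.par P (.par Q R))
  | parZero (P) : SC (.par P .zero) P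
  | sumComm (P Q) : SC (.sum P Q) (.sum Q P)
  | sumAssoc (P Q R) : SC (.sum (.sum P Q) R) (.sum P (.sum Q R))
  | sumZero (P) : SC (.sum P .zero) P
  | scopePar : Sum.inl n ∉ Proc.fn P → SC (.resAmb n (.par P Q)) (.par P (.resAmb n Q))
  | scopeAmb : n.name ≠ m.name → SC (.resAmb n (.amb m P)) (.amb m (.resAmb n P))
  | resRes (n m P) : SC (.resAmb n (.resAmb m P)) (.resAmb m (.resAmb n P))
  | resZero (n) : SC (.resAmb n .zero) .zero
  | epsP (P) : SC (.cap .eps P) P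
  | capSeq (c c' P) : SC (.cap (.seq c c') P) (.cap c (.cap c' P))

/-- The reduction relation of CMC. -/
inductive Red : Proc → Proc → Prop
  | rin : Red (.par (.amb m (.par (.cap (.inn n) P) Q)) (.amb n R))
              (.amb n (.par (.amb m (.par P Q)) R))
  | rout : Red (.amb n (.par (.amb m (.par (.cap (.out n) P) Q)) R))
               (.par (.amb m (.par P Q)) (.amb n R))
  | rploc : Red (.amb m (.par (.amb n (.par (.cap (.ploc x) P) Q)) R))
                (.amb m (.par (.amb n (.par (P.subst x (.name m)) Q)) R))
  | rsloc : Red (.par (.amb m P) (.amb n (.par (.cap (.sloc x) Q) S)))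
                (.par (.amb m P) (.amb n (.par (Q.subst x (.name m)) S)))
  | parCtx : Red P P' → Red (.par P Q) (.par P' Q)
  | ambCtx : Red P P' → Red (.amb m P) (.amb m P')
  | resACtx : Red P P' → Red (.resAmb m P) (.resAmb m P')
  | resPCtx : Red P P' → Red (.resPort l P) (.resPort l P')
  | struct : SC P Q → Red Q Q' → SC Q' P' → Red P P'

/-- Transition labels of the CMC labelled transition system. -/
inductive Label where
  | inn : AmbName → Label
  | out : AmbName → Label
  | enter : AmbName → Label
  | move : AmbName → Label
  | exit : AmbName → Label
  | inp : ℕ → Cap → Label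
  | outp : ℕ → Cap → Label
  | tau : Label
  | ploc1 : ℕ → Label
  | plocL : ℕ → Label
  | sloc1 : ℕ → Label
  | slocL : ℕ → Label
  | ambL : AmbName → Label

def Label.fn : Label → Set (AmbName ⊕ ℕ)
  | .inn n => {Sum.inl n}
  | .out n => {Sum.inl n}
  | .enter n => {Sum.inl n}
  | .move n => {Sum.inl n}
  | .exit n => {Sum.inl n}
  | .ambL n => {Sum.inl n}
  | .inp a v => insert (Sum.inr a) v.fn
  | .outp a v => insert (Sum.inr a) v.fn
  | _ => ∅

/-- Outcomes: processes or concretions (ν m̃)⟨P⟩Q. -/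
inductive Outcome where
  | proc : Proc → Outcome
  | conc : List AmbName → Proc → Proc → Outcome

def Outcome.names : Outcome → List AmbName
  | .proc _ => []
  | .conc ms _ _ => ms

def Outcome.parR : Outcome → Proc → Outcome
  | .proc P, Q => .proc (.par P Q)
  | .conc ms P R, Q => .conc ms P (.par R Q)

open Classical in
noncomputable def Outcome.resA (u : AmbName) : Outcome → Outcome
  | .proc P => .proc (.resAmb u P)
  | .conc ms P Q => if Sum.inl u ∈ P.fn then .conc (u :: ms) P Q else .conc ms P (.resAmb u Q)

def Outcome.resP (l : ℕ) : Outcome → Outcome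
  | .proc P => .proc (.resPort l P)
  | .conc ms P Q => .conc ms P (.resPort l Q)

/-- Structural congruence lifted to outcomes. -/
inductive OutSC : Outcome → Outcome → Prop
  | proc : SC P Q → OutSC (.proc P) (.proc Q)
  | conc : SC P P' → SC Q Q' → OutSC (.conc ms P Q) (.conc ms P' Q')

/-- The labelled transition system of CMC. -/
inductive CTrans : Proc → Label → Outcome → Prop
  | actIn : CTrans (.cap (.inn n) P) (.inn n) (.proc P)
  | actOut : CTrans (.cap (.out n) P) (.out n) (.proc P)
  | enter : CTrans P (.inn n) (.proc P') →
      CTrans (.amb m P) (.enter n) (.conc [] (.amb m P') .zero)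
  | coEnter : CTrans (.amb n P) (.move n) (.conc [] P .zero)
  | tauIn : CTrans P (.enter n) (.conc ps P' P'') → CTrans Q (.move n) (.conc qs Q' Q'') →
      (∀ q ∈ qs, Sum.inl q ∉ P'.fn ∧ Sum.inl q ∉ P''.fn) →
      (∀ p ∈ ps, Sum.inl p ∉ Q'.fn ∧ Sum.inl p ∉ Q''.fn) →
      CTrans (.par P Q) .tau
        (.proc (resList ps (resList qs (.par (.amb n (.par P' Q')) (.par P'' Q'')))))
  | exit : CTrans P (.out n) (.proc P') →
      CTrans (.amb m P) (.exit n) (.conc [] (.amb m P') .zero)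
  | tauOut : CTrans P (.exit n) (.conc ms P' P'') →
      (∀ m∈ ms, Sum.inl m ∉ P'.fn ∧ Sum.inl m ∉ P''.fn) →
      CTrans (.amb n P) .tau (.proc (resList ms (.par P' (.amb n P''))))
  | lamPar : CTrans P l O → (∀ m ∈ O.names, Sum.inl m ∉ Q.fn) →
      CTrans (.par P Q) l (O.parR Q)
  | lamResA : CTrans P l O → Sum.inl u ∉ l.fn → CTrans (.resAmb u P) l (O.resA u)
  | lamResP : CTrans P l O → Sum.inr u ∉ l.fn → CTrans (.resPort u P) l (O.resP u)
  | tauAmb : CTrans P .tau (.proc P') → CTrans (.amb n P) .tau (.proc (.amb n P'))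
  | struct : SC P Q → CTrans Q l O → OutSC O O' → CTrans P l O'
  | inputR : CTrans (.input a z P) (.inp a v) (.proc (P.subst z v))
  | outputR : CTrans (.output a v P) (.outp a v) (.proc P)
  | tauPre : CTrans (.tauP P) .tau (.proc P)
  | sumL : CTrans P l O → CTrans (.sum P Q) l O
  | sumR : CTrans Q l O → CTrans (.sum P Q) l O
  | parCom : CTrans P (.inp a v) (.proc P') → CTrans Q (.outp a v) (.proc Q') →
      CTrans (.par P Q) .tau (.proc (.par P' Q'))
  | globalComI : CTrans P (.inp a v) (.proc P') → a ∈ m.ports →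
      CTrans (.amb m P) (.inp a v) (.proc (.amb m P'))
  | globalComO : CTrans P (.outp a v) (.proc P') → a ∈ m.ports →
      CTrans (.amb m P) (.outp a v) (.proc (.amb m P'))
  | actPloc : z ∉ P.vars → CTrans (.cap (.ploc x) P) (.plocL z) (.proc (P.subst x (.var z)))
  | plocAmb : CTrans P (.plocL z) (.proc P') → CTrans (.amb n P) (.plocL z) (.proc (.amb n P'))
  | plocPar : CTrans P (.plocL z) (.proc P') → z ∉ Q.vars →
      CTrans (.par P Q) (.plocL z) (.proc (.par P' Q))
  | ploc1 : CTrans (.amb n P) (.ploc1 z) (.conc [] (.amb n P) .zero)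
  | tauPloc : CTrans P (.ploc1 z) (.conc ps P' Q) → CTrans P' (.plocL z) (.proc P'') →
      CTrans (.amb m P) .tau (.proc (resList ps (.amb m (.par (P''.subst z (.name m)) Q))))
  | actSloc : z ∉ P.vars → CTrans (.cap (.sloc x) P) (.slocL z) (.proc (P.subst x (.var z)))
  | slocAmb : CTrans P (.slocL z) (.proc P') → CTrans (.amb n P) (.slocL z) (.proc (.amb n P'))
  | slocPar : CTrans P (.slocL z) (.proc P') → z ∉ Q.vars →
      CTrans (.par P Q) (.slocL z) (.proc (.par P' Q))
  | sloc1 : CTrans (.amb n P) (.sloc1 z) (.conc [] (.amb n P) .zero)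
  | sibAmb : CTrans (.amb n P) (.ambL n) (.proc P)
  | parAmb : CTrans P (.ambL n) (.proc P') → CTrans (.par P Q) (.ambL n) (.proc P')
  | tauSloc : CTrans P (.sloc1 z) (.conc ps P' P''') → CTrans P' (.slocL z) (.proc P'') →
      CTrans Q (.ambL n) (.proc Q') →
      CTrans (.par P Q) .tau (.proc (.par (resList ps (.par (P''.subst z (.name n)) P''')) Q))

def TauStep (P Q : Proc) : Prop := CTrans P .tau (.proc Q)

def TauStar : Proc → Proc → Prop := Relation.ReflTransGen TauStep

/-- Weak transition ⇒α̂⇒ for a visible action α. -/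
def WeakAct (l : Label) (P Q : Proc) : Prop :=
  ∃ P1 P2, TauStar P P1 ∧ CTrans P1 l (.proc P2) ∧ TauStar P2 Q

/-- Barb P↓ₙ : P exhibits ambient n at top level. -/
def Barb (P : Proc) (n : AmbName) : Prop :=
  ∃ ms P1 P2, n ∉ ms ∧ SC P (resList ms (.par (.amb n P1) P2))

def WeakBarb (P : Proc) (n : AmbName) : Prop := ∃ Q, TauStar P Q ∧ Barb Q n

/-- The actions matched in barbed bisimulations: a(z), ā(z), in m, out m. -/
def IsBAct : Label → Prop
  | .inp _ _ => True
  | .outp _ _ => True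
  | .inn _ => True
  | .out _ => True
  | _ => False

/-- Barbed bisimulation. -/
def IsBisim (S : Proc → Proc → Prop) : Prop :=
  Symmetric S ∧ ∀ P Q, S P Q →
    (∀ l P', IsBAct l → CTrans P l (.proc P') → ∃ Q', WeakAct l Q Q' ∧ S P' Q') ∧
    (∀ n, Barb P n → WeakBarb Q n)

/-- Barbed bisimilarity: the union of all barbed bisimulations. -/
def Bisim (P Q : Proc) : Prop := ∃ S, IsBisim S ∧ S P Q

/-- Capability barb P↓_β. -/
def CapBarb (P : Proc) (b : Label) : Prop := ∃ O, CTrans P b O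

def WeakCapBarb (P : Proc) (b : Label) : Prop := ∃ P', TauStar P P' ∧ CapBarb P' b

/-- β-barbed bisimulation. -/
def IsCapBisim (b : Label) (S : Proc → Proc → Prop) : Prop :=
  Symmetric S ∧ ∀ P Q, S P Q →
    (∀ l P', IsBAct l → CTrans P l (.proc P') → ∃ Q', WeakAct l Q Q' ∧ S P' Q') ∧
    (CapBarb P b → WeakCapBarb Q b)

def CapBisim (b : Label) (P Q : Proc) : Prop := ∃ S, IsCapBisim b S ∧ S P Q

/-- Contexts: processes with holes. -/
inductive Ctx where
  | hole : Ctx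
  | zero : Ctx
  | cap : Cap → Ctx → Ctx
  | input : ℕ → ℕ → Ctx → Ctx
  | output : ℕ → Cap → Ctx → Ctx
  | tauP : Ctx → Ctx
  | amb : AmbName → Ctx → Ctx
  | sum : Ctx → Ctx → Ctx
  | par : Ctx → Ctx → Ctx
  | resAmb : AmbName → Ctx → Ctx
  | resPort : ℕ → Ctx → Ctx
  | procC : Proc → Ctx

def Ctx.fill : Ctx → Proc → Proc
  | .hole, P => P
  | .zero, _ => .zero
  | .cap c C, P => .cap c (C.fill P)
  | .input a z C, P => .input a z (C.fill P)
  | .output a v C, P => .output a v (C.fill P)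
  | .tauP C, P => .tauP (C.fill P)
  | .amb m C, P => .amb m (C.fill P)
  | .sum C D, P => .sum (C.fill P) (D.fill P)
  | .par C D, P => .par (C.fill P) (D.fill P)
  | .resAmb m C, P => .resAmb m (C.fill P)
  | .resPort l C, P => .resPort l (C.fill P)
  | .procC Q, _ => Q

/-- Barbed congruence. -/
def Cong (P Q : Proc) : Prop := ∀ C : Ctx, Bisim (C.fill P) (C.fill Q)

/-- β-barbed congruence. -/
def CapCong (b : Label) (P Q : Proc) : Prop := ∀ C : Ctx, CapBisim b (C.fill P) (C.fill Q)

def Cap.basic : Cap → Prop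
  | .ploc _ => False
  | .sloc _ => False
  | .seq c1 c2 => c1.basic ∧ c2.basic
  | _ => True

/-- The sub-calculus T' of CMC_b: no action prefixing, no choice, no
relabelling (and only the CMC_b capabilities). -/
def Proc.inT' : Proc → Prop
  | .zero => True
  | .cap c P => c.basic ∧ P.inT'
  | .input _ _ _ => False
  | .output _ _ _ => False
  | .tauP _ => False
  | .sum _ _ => False
  | .amb _ P => P.inT'
  | .par P Q => P.inT' ∧ Q.inT'
  | .resAmb _ P => P.inT'
  | .resPort _ P => P.inT'

/-- The sub-calculus T''' of CMC: no action prefixing, no choice, no relabelling. -/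
def Proc.inT3 : Proc → Prop
  | .zero => True
  | .cap _ P => P.inT3
  | .input _ _ _ => False
  | .output _ _ _ => False
  | .tauP _ => False
  | .sum _ _ => False
  | .amb _ P => P.inT3
  | .par P Q => P.inT3 ∧ Q.inT3
  | .resAmb _ P => P.inT3
  | .resPort _ P => P.inT3

/-- The context C₁[·] = ν m_A([·]) | ν a (k_C[in n_B.out n_B.ā.0] | a.m_A[P]). -/
def C1 (m k n : AmbName) (a : ℕ) (P R : Proc) : Proc :=
  .par (.resAmb m R)
    (.resPort a (.par (.amb k (.cap (.inn n) (.cap (.out n) (.output a .eps .zero))))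
                      (.input a 0 (.amb m P))))


/-!
Induction on the derivation of `P → P'`. Each reduction axiom is matched by a τ-transition built
from the corresponding rules (In by Enter, Co-Enter and τ-In; Out by Exit and τ-Out; the two
location axioms through a fresh variable that is afterwards instantiated by the ambient name),
reduction contexts by λ-Par, τ-Amb and λ-Res, and ≡ by Struct. Since transitions are closed
under ≡ on both sides, the τ-derivative can be taken to be `P'` itself, which lies in T'.
-/

lemma Cap.vars_finite (c : Cap) : c.vars.Finite := by
  induction c <;> simp_all [Cap.vars]

lemma Proc.vars_finite (P : Proc) : P.vars.Finite := by
  induction P <;> simp_all [Proc.vars, Cap.vars_finite]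

lemma Proc.exists_notMem_vars (P Q : Proc) : ∃ z, z ∉ P.vars ∧ z ∉ Q.vars := by
  obtain ⟨z, hz⟩ := (P.vars_finite.union Q.vars_finite).infinite_compl.nonempty
  exact ⟨z, by simpa [not_or] using hz⟩

lemma Cap.subst_of_notMem_vars {c : Cap} {z : ℕ} {k : Cap} (h : z ∉ c.vars) :
    c.subst z k = c := by
  induction c <;> grind [Cap.vars, Cap.subst]

lemma Cap.subst_var_subst {c : Cap} {x z : ℕ} {k : Cap} (h : z ∉ c.vars) :
    (c.subst x (.var z)).subst z k = c.subst x k := by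
  induction c <;> grind [Cap.vars, Cap.subst]

lemma Proc.subst_of_notMem_vars {P : Proc} {z : ℕ} {k : Cap} (h : z ∉ P.vars) :
    P.subst z k = P := by
  induction P <;> grind [Proc.vars, Proc.subst, Cap.subst_of_notMem_vars]

lemma Proc.subst_var_subst {P : Proc} {x z : ℕ} {k : Cap} (h : z ∉ P.vars) :
    (P.subst x (.var z)).subst z k = P.subst x k := by
  induction P <;> grind [Proc.vars, Proc.subst, Cap.subst_var_subst, Proc.subst_of_notMem_vars]

lemma SC.par_right {Q Q' : Proc} (P : Proc) (h : SC Q Q') : SC (.par P Q) (.par P Q') :=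
  (SC.parComm P Q).trans ((SC.parC h).trans (SC.parComm Q' P))

lemma SC.zero_par (P : Proc) : SC (.par .zero P) P :=
  (SC.parComm _ _).trans (SC.parZero P)

namespace CTrans

lemma of_sc_left {P Q : Proc} {l : Label} {O : Outcome} (hPQ : SC P Q) (h : CTrans Q l O) :
    CTrans P l O :=
  .struct hPQ h <| match O with
    | .proc _ => .proc (.refl _)
    | .conc _ _ _ => .conc (.refl _) (.refl _)

lemma of_sc_right {P Q Q' : Proc} {l : Label} (h : CTrans P l (.proc Q)) (hQ : SC Q Q') :
    CTrans P l (.proc Q') :=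
  .struct (.refl P) h (.proc hQ)

lemma par_left {P P' : Proc} {l : Label} (Q : Proc) (h : CTrans P l (.proc P')) :
    CTrans (.par P Q) l (.proc (.par P' Q)) :=
  .lamPar h (by simp [Outcome.names])

lemma par_left_conc {P P' P'' : Proc} {l : Label} (Q : Proc) (h : CTrans P l (.conc [] P' P'')) :
    CTrans (.par P Q) l (.conc [] P' (.par P'' Q)) :=
  .lamPar h (by simp [Outcome.names])

end CTrans

section Axioms

variable {m n : AmbName} {x : ℕ} {P Q R : Proc}

lemma tauStep_in :
    TauStep (.par (.amb m (.par (.cap (.inn n) P) Q)) (.amb n R))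
      (.amb n (.par (.amb m (.par P Q)) R)) :=
  (CTrans.tauIn (.enter (CTrans.actIn.par_left Q)) .coEnter (by simp) (by simp)).of_sc_right
    ((SC.par_right _ (SC.parZero _)).trans (SC.parZero _))

lemma tauStep_out :
    TauStep (.amb n (.par (.amb m (.par (.cap (.out n) P) Q)) R))
      (.par (.amb m (.par P Q)) (.amb n R)) :=
  (CTrans.tauOut ((CTrans.exit (CTrans.actOut.par_left Q)).par_left_conc R) (by simp))
    |>.of_sc_right (SC.par_right _ (.ambC (SC.zero_par R)))

lemma tauStep_ploc :
    TauStep (.amb m (.par (.amb n (.par (.cap (.ploc x) P) Q)) R))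
      (.amb m (.par (.amb n (.par (P.subst x (.name m)) Q)) R)) := by
  obtain ⟨z, hzP, hzQ⟩ := P.exists_notMem_vars Q
  have hloc : CTrans (.amb n (.par (.cap (.ploc x) P) Q)) (.plocL z)
      (.proc (.amb n (.par (P.subst x (.var z)) Q))) :=
    .plocAmb (.plocPar (.actPloc hzP) hzQ)
  have hsubst : (Proc.amb n (.par (P.subst x (.var z)) Q)).subst z (.name m) =
      .amb n (.par (P.subst x (.name m)) Q) := by
    simp [Proc.subst, Proc.subst_var_subst hzP, Proc.subst_of_notMem_vars hzQ]
  have h := CTrans.tauPloc (m := m) (CTrans.ploc1.par_left_conc R) hloc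
  rw [resList, List.foldr_nil, hsubst] at h
  exact h.of_sc_right (.ambC (SC.par_right _ (SC.zero_par R)))

lemma tauStep_sloc :
    TauStep (.par (.amb m P) (.amb n (.par (.cap (.sloc x) Q) R)))
      (.par (.amb m P) (.amb n (.par (Q.subst x (.name m)) R))) := by
  obtain ⟨z, hzQ, hzR⟩ := Q.exists_notMem_vars R
  have hloc : CTrans (.amb n (.par (.cap (.sloc x) Q) R)) (.slocL z)
      (.proc (.amb n (.par (Q.subst x (.var z)) R))) :=
    .slocAmb (.slocPar (.actSloc hzQ) hzR)
  have hsubst : (Proc.amb n (.par (Q.subst x (.var z)) R)).subst z (.name m) =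
      .amb n (.par (Q.subst x (.name m)) R) := by
    simp [Proc.subst, Proc.subst_var_subst hzQ, Proc.subst_of_notMem_vars hzR]
  have h := CTrans.tauSloc .sloc1 hloc (.sibAmb (n := m) (P := P))
  rw [resList, List.foldr_nil, hsubst] at h
  exact (h.of_sc_left (SC.parComm _ _)).of_sc_right
    ((SC.parC (SC.parZero _)).trans (SC.parComm _ _))

end Axioms

theorem Red.tauStep {P P' : Proc} (h : Red P P') : TauStep P P' := by
  induction h with
  | rin => exact tauStep_in
  | rout => exact tauStep_out
  | rploc => exact tauStep_ploc
  | rsloc => exact tauStep_sloc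
  | parCtx _ ih => exact ih.par_left _
  | ambCtx _ ih => exact .tauAmb ih
  | resACtx _ ih => exact .lamResA ih (by simp [Label.fn])
  | resPCtx _ ih => exact .lamResP ih (by simp [Label.fn])
  | struct hPQ _ hQP' ih => exact (ih.of_sc_left hPQ).of_sc_right hQP'

theorem lts_sound : ∀ P P' : Proc, P.inT' → P'.inT' → Red P P' →
    ∃ Q : Proc, Q.inT' ∧ CTrans P .tau (.proc Q) ∧ SC Q P' :=
  fun _ P' _ hP' hred => ⟨P', hP', hred.tauStep, .refl P'⟩
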